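/- If a formula A is closed under stuttering, then ◇A (eventually A) is closed under stuttering. -/

import Mathlib

def State := String → Bool

def StSeq := ℕ → State

def drop (k : ℕ) (s : StSeq) : StSeq := fun n => s (k + n)

def stutter (s : StSeq) (i : ℕ) : StSeq := fun n => if n ≤ i then s n else s (n - 1)

def CUS (F : StSeq → Prop) : Prop := ∀ (s : StSeq) (i : ℕ), F s ↔ F (stutter s i)

def Var (a : String) : StSeq → Prop := fun s => s 0 a = true

def Not' (F : StSeq → Prop) : StSeq → Prop := fun s => ¬ F s

def And' (F G : StSeq → Prop) : StSeq → Prop := fun s => F s ∧ G s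

def Or' (F G : StSeq → Prop) : StSeq → Prop := fun s => F s ∨ G s

def Imp' (F G : StSeq → Prop) : StSeq → Prop := fun s => F s → G s

def Iff' (F G : StSeq → Prop) : StSeq → Prop := fun s => F s ↔ G s

def Next (F : StSeq → Prop) : StSeq → Prop := fun s => F (drop 1 s)

def Always (F : StSeq → Prop) : StSeq → Prop := fun s => ∀ k, F (drop k s)

def Ev (F : StSeq → Prop) : StSeq → Prop := fun s => ∃ k, F (drop k s)

def Until' (F G : StSeq → Prop) : StSeq → Prop :=
  fun s => ∃ k, G (drop k s) ∧ ∀ j < k, F (drop j s)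

def Up (F : StSeq → Prop) : StSeq → Prop := And' (Not' F) (Next F)

def Down (F : StSeq → Prop) : StSeq → Prop := And' F (Next (Not' F))

def AnyEdge (F : StSeq → Prop) : StSeq → Prop := Or' (Up F) (Down F)

/-! A suffix of `stutter s i` starting at or before position `i` is a stuttering of the
corresponding suffix of `s`; one starting after `i` is a suffix of `s` itself, shifted by one.
So a witness for `◇A` moves between `s` and `stutter s i`, using closure of `A` in the first case. -/

lemma drop_stutter_of_le (s : StSeq) {i k : ℕ} (h : k ≤ i) :
    drop k (stutter s i) = stutter (drop k s) (i - k) := by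
  funext n
  simp only [drop, stutter]
  split_ifs <;> first | rfl | omega | (congr 1; omega)

lemma drop_stutter_of_lt (s : StSeq) {i k : ℕ} (h : i < k) :
    drop k (stutter s i) = drop (k - 1) s := by
  funext n
  simp only [drop, stutter]
  rw [if_neg (by omega)]
  congr 1
  omega

theorem cus_ev (A : StSeq → Prop) (hA : CUS A) : CUS (Ev A) := by
  intro s i
  constructor
  · rintro ⟨k, hk⟩
    rcases le_or_gt k i with h | h
    · exact ⟨k, by rw [drop_stutter_of_le s h]; exact (hA _ _).mp hk⟩
    · exact ⟨k + 1, by rwa [drop_stutter_of_lt s (by omega), Nat.add_sub_cancel]⟩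
  · rintro ⟨k, hk⟩
    rcases le_or_gt k i with h | h
    · rw [drop_stutter_of_le s h] at hk
      exact ⟨k, (hA _ _).mpr hk⟩
    · rw [drop_stutter_of_lt s h] at hk
      exact ⟨k - 1, hk⟩
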